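/- arXiv:2305.07951 — 6 statements merged into one kernel-verified Lean document; each statement's English description precedes it below -/
import Mathlib

section
/- Let G be a topological group acting continuously and transitively on a topological space X, fix x₀ ∈ X, let p : G → X be the map p(g) = g·x₀, and let G_{x₀} = {k ∈ G : k·x₀ = x₀} be the stabilizer of x₀. Suppose there exists an open neighborhood U of x₀ and a continuous map s : U → G with s(x)·x₀ = x for all x ∈ U. Then for every x ∈ X there exist an open neighborhood W of x and a homeomorphism φ : p⁻¹(W) → W × G_{x₀} such that (i) the first component of φ(g) equals p(g) for all g ∈ p⁻¹(W), and (ii) φ is fiberwise equivariant: writing φ(g) = (p(g), ψ(g)), one has ψ(gk) = ψ(g)k for all g ∈ p⁻¹(W) and all k ∈ G_{x₀}. In particular p : G → X is a principal G_{x₀}-bundle; an explicit trivialization over g₀U (for g₀ ∈ p⁻¹({x})) is φ(g) = (p(g), s(g₀⁻¹·p(g))⁻¹ g₀⁻¹ g). -/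
/-! A continuous local section `σ` of the orbit map `p g = g • x₀` over an open set
`W` trivializes `p` over `W` by `g ↦ (p g, σ (p g)⁻¹ * g)`, with inverse `(w, k) ↦ σ w * k`;
translating the given section `s` over `U` by any `g₀` with `g₀ • x₀ = x` gives a section over
the neighbourhood `g₀ • U` of `x`. -/

open MulAction Pointwise

structure IsLocalSection {G X : Type*} [Group G] [TopologicalSpace G] [TopologicalSpace X]
    [MulAction G X] (x₀ : X) (W : Set X) (σ : X → G) : Prop where
  continuousOn : ContinuousOn σ W
  smul_eq : ∀ y ∈ W, σ y • x₀ = y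

namespace IsLocalSection

variable {G X : Type*} [Group G] [TopologicalSpace G] [TopologicalSpace X] [MulAction G X]
  {x₀ : X} {W : Set X} {σ : X → G}

theorem translate [ContinuousMul G] [ContinuousConstSMul G X] (hσ : IsLocalSection x₀ W σ)
    (g₀ : G) : IsLocalSection x₀ (g₀ • W) (fun y => g₀ * σ (g₀⁻¹ • y)) where
  continuousOn := continuousOn_const.mul <| hσ.continuousOn.comp
    (continuous_const_smul _).continuousOn fun _ hy => Set.mem_smul_set_iff_inv_smul_mem.mp hy
  smul_eq y hy := by
    rw [mul_smul, hσ.smul_eq _ (Set.mem_smul_set_iff_inv_smul_mem.mp hy), smul_inv_smul]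

theorem inv_mul_mem_stabilizer (hσ : IsLocalSection x₀ W σ) {g : G} (hg : g • x₀ ∈ W) :
    (σ (g • x₀))⁻¹ * g ∈ stabilizer G x₀ := by
  rw [mem_stabilizer_iff, mul_smul, inv_smul_eq_iff, hσ.smul_eq _ hg]

theorem mul_smul_eq (hσ : IsLocalSection x₀ W σ) {w : X} (hw : w ∈ W) (k : stabilizer G x₀) :
    (σ w * k) • x₀ = w := by
  rw [mul_smul, mem_stabilizer_iff.mp k.2, hσ.smul_eq _ hw]

variable [IsTopologicalGroup G] [ContinuousSMul G X]

def trivialization (hσ : IsLocalSection x₀ W σ) :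
    {g : G // g • x₀ ∈ W} ≃ₜ (W × stabilizer G x₀) where
  toFun g :=
    (⟨g.1 • x₀, g.2⟩, ⟨(σ (g.1 • x₀))⁻¹ * g, hσ.inv_mul_mem_stabilizer g.2⟩)
  invFun wk := ⟨σ wk.1 * wk.2, by rw [hσ.mul_smul_eq wk.1.2]; exact wk.1.2⟩
  left_inv g := Subtype.ext (mul_inv_cancel_left _ _)
  right_inv := by
    rintro ⟨⟨w, hw⟩, k⟩
    have hp := hσ.mul_smul_eq hw k
    refine Prod.ext (Subtype.ext hp) (Subtype.ext ?_)
    simp only [hp, inv_mul_cancel_left]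
  continuous_toFun := by
    have hp : Continuous fun g : {g : G // g • x₀ ∈ W} => g.1 • x₀ :=
      continuous_subtype_val.smul continuous_const
    have hσp : Continuous fun g : {g : G // g • x₀ ∈ W} => σ (g.1 • x₀) :=
      hσ.continuousOn.comp_continuous hp fun g => g.2
    exact (hp.subtype_mk _).prodMk
      ((hσp.inv.mul continuous_subtype_val).subtype_mk _)
  continuous_invFun := by
    have hσw : Continuous fun wk : W × stabilizer G x₀ => σ wk.1 :=
      hσ.continuousOn.comp_continuous (continuous_subtype_val.comp continuous_fst)
        fun wk => wk.1.2
    exact (hσw.mul (continuous_subtype_val.comp continuous_snd)).subtype_mk _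

theorem trivialization_fst (hσ : IsLocalSection x₀ W σ) (g : {g : G // g • x₀ ∈ W}) :
    ((hσ.trivialization g).1 : X) = (g : G) • x₀ :=
  rfl

theorem trivialization_mul (hσ : IsLocalSection x₀ W σ) (g : {g : G // g • x₀ ∈ W})
    (k : stabilizer G x₀) :
    hσ.trivialization ⟨(g : G) * (k : G), by
        rw [mul_smul, mem_stabilizer_iff.mp k.2]; exact g.2⟩ =
      ((hσ.trivialization g).1, (hσ.trivialization g).2 * k) := by
  have hpk : ((g : G) * (k : G)) • x₀ = (g : G) • x₀ := by
    rw [mul_smul, mem_stabilizer_iff.mp k.2]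
  refine Prod.ext (Subtype.ext hpk) (Subtype.ext ?_)
  change (σ (((g : G) * k) • x₀))⁻¹ * ((g : G) * k) = (σ ((g : G) • x₀))⁻¹ * g * k
  rw [hpk, mul_assoc]

end IsLocalSection

/-- If a topological group `G` acts continuously and transitively on `X` and the orbit map
`p : g ↦ g • x₀` admits a continuous local section near `x₀`, then `p` is a principal
bundle with structure group the stabilizer of `x₀`: every point of `X` has an open
neighborhood `W` over which `p` trivializes by a fiberwise right-equivariant homeomorphism
`p⁻¹(W) ≃ W × G_{x₀}` commuting with the projections. -/
theorem stabilizer_principal_bundle {G X : Type*} [Group G] [TopologicalSpace G]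
    [IsTopologicalGroup G] [TopologicalSpace X] [MulAction G X] [ContinuousSMul G X]
    (htrans : ∀ x y : X, ∃ g : G, g • x = y)
    (x₀ : X) (U : Set X) (hUopen : IsOpen U) (hx₀U : x₀ ∈ U)
    (s : X → G) (hscont : ContinuousOn s U) (hsec : ∀ x ∈ U, s x • x₀ = x)
    (x : X) :
    ∃ W : Set X, IsOpen W ∧ x ∈ W ∧
      ∃ φ : {g : G // g • x₀ ∈ W} ≃ₜ (↥W × ↥(MulAction.stabilizer G x₀)),
        -- the first component of φ g is p g = g • x₀
        (∀ g : {g : G // g • x₀ ∈ W}, ((φ g).1 : X) = (g : G) • x₀) ∧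
        -- φ is fiberwise equivariant for the right action of the stabilizer
        (∀ (g : {g : G // g • x₀ ∈ W}) (k : MulAction.stabilizer G x₀),
          φ ⟨(g : G) * (k : G), by
              rw [mul_smul, MulAction.mem_stabilizer_iff.mp k.2]; exact g.2⟩
            = ((φ g).1, (φ g).2 * k)) := by
  obtain ⟨g₀, rfl⟩ := htrans x₀ x
  have hσ : IsLocalSection x₀ (g₀ • U) (fun y => g₀ * s (g₀⁻¹ • y)) :=
    (IsLocalSection.mk hscont hsec).translate g₀
  exact ⟨g₀ • U, hUopen.smul g₀, Set.smul_mem_smul_set hx₀U, hσ.trivialization,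
    hσ.trivialization_fst, hσ.trivialization_mul⟩
end

section
/- Let G be a topological group, X a topological space, 𝒰 = (U_i)_{i∈I} an indexed open cover of X, 𝒱 = (V_j)_{j∈J} a refinement of 𝒰, and r : J → I a function with V_j ⊆ U_{r(j)} for all j ∈ J. If g and h are Čech 1-cocycles of 𝒰 with values in G such that the pulled-back cocycles g^r and h^r (g^r_{ij} = g_{r(i)r(j)}|_{V_i ∩ V_j}) are cohomologous as 1-cocycles of 𝒱, then g and h are cohomologous as 1-cocycles of 𝒰. Consequently the induced map ι_{𝒱𝒰} on first Čech cohomology sets, sending the class of g to the class of g^r, is injective. -/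
/-!
Choose for every point `x` a member `V k` of the refinement containing it and put
`μ_i(x) = h_{i,r k}(x) λ_k(x) g_{r k,i}(x)`. The cocycle identities for `g` and `h` together with
`h^r = λ g^r λ⁻¹` show that this does not depend on `k`, so `μ_i` is locally given by a continuous
formula and hence continuous on `U_i`; and for any such `k` the cocycle identities alone give
`h_{ij} = μ_i g_{ij} μ_j⁻¹`.
-/

open Set

theorem exists_continuousOn_eqOn_of_compatible {X Y J : Type*} [TopologicalSpace X]
    [TopologicalSpace Y] {S : Set X} {V : J → Set X} (hVopen : ∀ j, IsOpen (V j))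
    (hVcov : ∀ x : X, ∃ j, x ∈ V j) (f : J → X → Y) (hf : ∀ j, ContinuousOn (f j) (S ∩ V j))
    (hcompat : ∀ j j', ∀ x ∈ S, x ∈ V j → x ∈ V j' → f j x = f j' x) :
    ∃ F : X → Y, ContinuousOn F S ∧ ∀ j, ∀ x ∈ S ∩ V j, F x = f j x := by
  choose sel hsel using hVcov
  have hF : ∀ j, ∀ x ∈ S ∩ V j, f (sel x) x = f j x := fun j x hx =>
    hcompat _ _ x hx.1 (hsel x) hx.2
  refine ⟨fun x => f (sel x) x, ?_, hF⟩
  refine continuousOn_of_locally_continuousOn fun x _ => ⟨V (sel x), hVopen _, hsel x, ?_⟩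
  exact (hf (sel x)).congr (hF (sel x))

section Cech

variable {G X I J : Type*} [Group G] {U : I → Set X} {g h : I → I → X → G}

def IsCechCocycle (U : I → Set X) (g : I → I → X → G) : Prop :=
  ∀ i j k : I, ∀ x ∈ U i ∩ U j ∩ U k, g i j x * g j k x = g i k x

theorem IsCechCocycle.apply_self (hg : IsCechCocycle U g) {i : I} {x : X} (hx : x ∈ U i) :
    g i i x = 1 :=
  mul_eq_left.mp (hg i i i x ⟨⟨hx, hx⟩, hx⟩)

theorem IsCechCocycle.apply_swap (hg : IsCechCocycle U g) {i j : I} {x : X} (hxi : x ∈ U i)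
    (hxj : x ∈ U j) : g j i x = (g i j x)⁻¹ := by
  refine (inv_eq_of_mul_eq_one_right ?_).symm
  rw [hg i j i x ⟨⟨hxi, hxj⟩, hxi⟩, hg.apply_self hxi]

def descentCochain (g h : I → I → X → G) (r : J → I) (lam : J → X → G) (k : J) (i : I)
    (x : X) : G :=
  h i (r k) x * lam k x * g (r k) i x

variable {V : J → Set X} {r : J → I} {lam : J → X → G}

theorem descentCochain_eq_of_mem (hg : IsCechCocycle U g) (hh : IsCechCocycle U h)
    (hr : ∀ j, V j ⊆ U (r j))
    (hcoh : ∀ i j : J, ∀ x ∈ V i ∩ V j,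
      h (r i) (r j) x = lam i x * g (r i) (r j) x * (lam j x)⁻¹)
    {i : I} {k k' : J} {x : X} (hxi : x ∈ U i) (hxk : x ∈ V k) (hxk' : x ∈ V k') :
    descentCochain g h r lam k i x = descentCochain g h r lam k' i x := by
  have hxa := hr k hxk
  have hxb := hr k' hxk'
  calc h i (r k) x * lam k x * g (r k) i x
      = h i (r k') x * h (r k') (r k) x * lam k x * g (r k) i x := by
        rw [hh i (r k') (r k) x ⟨⟨hxi, hxb⟩, hxa⟩]
    _ = h i (r k') x * (lam k' x * g (r k') (r k) x * (lam k x)⁻¹) * lam k x * g (r k) i x := by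
        rw [hcoh k' k x ⟨hxk', hxk⟩]
    _ = h i (r k') x * lam k' x * (g (r k') (r k) x * g (r k) i x) := by group
    _ = h i (r k') x * lam k' x * g (r k') i x := by
        rw [hg (r k') (r k) i x ⟨⟨hxb, hxa⟩, hxi⟩]

theorem eq_descentCochain_mul_mul_inv (hg : IsCechCocycle U g) (hh : IsCechCocycle U h)
    (hr : ∀ j, V j ⊆ U (r j)) {i j : I} {k : J} {x : X} (hxi : x ∈ U i) (hxj : x ∈ U j)
    (hxk : x ∈ V k) :
    h i j x = descentCochain g h r lam k i x * g i j x * (descentCochain g h r lam k j x)⁻¹ := by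
  have hxa := hr k hxk
  calc h i j x = h i (r k) x * (h j (r k) x)⁻¹ := by
        rw [← hh.apply_swap hxj hxa, hh i (r k) j x ⟨⟨hxi, hxa⟩, hxj⟩]
    _ = h i (r k) x * lam k x * (g (r k) i x * g i j x) * (g (r k) j x)⁻¹ * (lam k x)⁻¹ *
          (h j (r k) x)⁻¹ := by
        rw [hg (r k) i j x ⟨⟨hxa, hxi⟩, hxj⟩]; group
    _ = _ := by simp only [descentCochain]; group

theorem continuousOn_descentCochain [TopologicalSpace X] [TopologicalSpace G] [ContinuousMul G]
    (hgcont : ∀ i j, ContinuousOn (g i j) (U i ∩ U j))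
    (hhcont : ∀ i j, ContinuousOn (h i j) (U i ∩ U j))
    (hlamcont : ∀ j, ContinuousOn (lam j) (V j)) (hr : ∀ j, V j ⊆ U (r j)) (k : J) (i : I) :
    ContinuousOn (descentCochain g h r lam k i) (U i ∩ V k) := by
  have hsub : U i ∩ V k ⊆ U i ∩ U (r k) := inter_subset_inter_right _ (hr k)
  refine (((hhcont i (r k)).mono hsub).mul ((hlamcont k).mono inter_subset_right)).mul ?_
  exact (hgcont (r k) i).mono (hsub.trans (inter_comm _ _).subset)

end Cech

theorem cech_pullback_cohomologous_descends_general {G X I J : Type*} [Group G]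
    [TopologicalSpace G] [IsTopologicalGroup G] [TopologicalSpace X]
    -- 𝒰 = (U i) is an indexed open cover of X
    (U : I → Set X)
    -- g and h are G-valued Čech 1-cocycles of 𝒰
    (g h : I → I → X → G)
    (hgcont : ∀ i j, ContinuousOn (g i j) (U i ∩ U j))
    (hgcoc : ∀ i j k : I, ∀ x ∈ U i ∩ U j ∩ U k, g i j x * g j k x = g i k x)
    (hhcont : ∀ i j, ContinuousOn (h i j) (U i ∩ U j))
    (hhcoc : ∀ i j k : I, ∀ x ∈ U i ∩ U j ∩ U k, h i j x * h j k x = h i k x)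
    -- 𝒱 = (V j) is an open refinement of 𝒰, with refining map r
    (V : J → Set X) (hVopen : ∀ j, IsOpen (V j)) (hVcov : ∀ x : X, ∃ j, x ∈ V j)
    (r : J → I) (hr : ∀ j, V j ⊆ U (r j))
    -- the pulled-back cocycles gʳ and hʳ are cohomologous via the 0-cochain lam of 𝒱
    (lam : J → X → G) (hlamcont : ∀ j, ContinuousOn (lam j) (V j))
    (hcoh : ∀ i j : J, ∀ x ∈ V i ∩ V j,
      h (r i) (r j) x = lam i x * g (r i) (r j) x * (lam j x)⁻¹) :
    -- then g and h are cohomologous 1-cocycles of 𝒰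
    ∃ mu : I → X → G,
      (∀ i, ContinuousOn (mu i) (U i)) ∧
      (∀ i j : I, ∀ x ∈ U i ∩ U j,
        h i j x = mu i x * g i j x * (mu j x)⁻¹) := by
  choose mu hmucont hmu_eq using fun i =>
    exists_continuousOn_eqOn_of_compatible hVopen hVcov (fun k => descentCochain g h r lam k i)
      (continuousOn_descentCochain hgcont hhcont hlamcont hr · i)
      fun _ _ _ hxi hxk hxk' => descentCochain_eq_of_mem hgcoc hhcoc hr hcoh hxi hxk hxk'
  refine ⟨mu, hmucont, fun i j x hx => ?_⟩
  obtain ⟨k, hxk⟩ := hVcov x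
  rw [hmu_eq i k x ⟨hx.1, hxk⟩, hmu_eq j k x ⟨hx.2, hxk⟩]
  exact eq_descentCochain_mul_mul_inv hgcoc hhcoc hr hx.1 hx.2 hxk

/-- If the pullbacks of two Čech 1-cocycles along a refinement are cohomologous, then the
original cocycles are cohomologous; hence the refinement map on first Čech cohomology is
injective. -/
theorem cech_pullback_cohomologous_descends {G X I J : Type*} [Group G]
    [TopologicalSpace G] [IsTopologicalGroup G] [TopologicalSpace X]
    -- 𝒰 = (U i) is an indexed open cover of X
    (U : I → Set X) (hUopen : ∀ i, IsOpen (U i)) (hUcov : ∀ x : X, ∃ i, x ∈ U i)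
    -- g and h are G-valued Čech 1-cocycles of 𝒰
    (g h : I → I → X → G)
    (hgcont : ∀ i j, ContinuousOn (g i j) (U i ∩ U j))
    (hgcoc : ∀ i j k : I, ∀ x ∈ U i ∩ U j ∩ U k, g i j x * g j k x = g i k x)
    (hhcont : ∀ i j, ContinuousOn (h i j) (U i ∩ U j))
    (hhcoc : ∀ i j k : I, ∀ x ∈ U i ∩ U j ∩ U k, h i j x * h j k x = h i k x)
    -- 𝒱 = (V j) is an open refinement of 𝒰, with refining map r
    (V : J → Set X) (hVopen : ∀ j, IsOpen (V j)) (hVcov : ∀ x : X, ∃ j, x ∈ V j)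
    (r : J → I) (hr : ∀ j, V j ⊆ U (r j))
    -- the pulled-back cocycles gʳ and hʳ are cohomologous via the 0-cochain lam of 𝒱
    (lam : J → X → G) (hlamcont : ∀ j, ContinuousOn (lam j) (V j))
    (hcoh : ∀ i j : J, ∀ x ∈ V i ∩ V j,
      h (r i) (r j) x = lam i x * g (r i) (r j) x * (lam j x)⁻¹) :
    -- then g and h are cohomologous 1-cocycles of 𝒰
    ∃ mu : I → X → G,
      (∀ i, ContinuousOn (mu i) (U i)) ∧
      (∀ i j : I, ∀ x ∈ U i ∩ U j,
        h i j x = mu i x * g i j x * (mu j x)⁻¹) :=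
  cech_pullback_cohomologous_descends_general U g h hgcont hgcoc hhcont hhcoc V hVopen hVcov r hr
    lam hlamcont hcoh
end

section
/- Let 𝓗 be a nonzero complex Hilbert space. The chord metric d_chd on ℙ𝓗, defined for rays with unit representatives Ψ, Ω ∈ 𝕊𝓗 by d_chd(ℂΨ, ℂΩ) = inf_{λ ∈ U(1)} ‖Ψ − λΩ‖, is a well-defined metric on ℙ𝓗; it is complete; it induces the quotient topology on ℙ𝓗; and it satisfies d_chd(ℂΨ, ℂΩ)² = 2 − 2⟪ℂΨ, ℂΩ⟫ for all Ψ, Ω ∈ 𝓗∖{0}. -/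
noncomputable section

/-- Two nonzero vectors are equivalent iff they span the same complex line. -/
def projSetoid (H : Type*) [NormedAddCommGroup H] [InnerProductSpace ℂ H] :
    Setoid {v : H // v ≠ 0} where
  r Ψ Ω := ∃ c : ℂ, (Ω : H) = c • (Ψ : H)
  iseqv := by
    refine ⟨fun Ψ => ⟨1, (one_smul ℂ (Ψ : H)).symm⟩, ?_, ?_⟩
    · rintro Ψ Ω ⟨c, hc⟩
      have hc0 : c ≠ 0 := by
        intro h
        apply Ω.2
        rw [h, zero_smul] at hc
        exact hc
      exact ⟨c⁻¹, by rw [hc, smul_smul, inv_mul_cancel₀ hc0, one_smul]⟩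
    · rintro Ψ Ω Ξ ⟨c, hc⟩ ⟨d, hd⟩
      exact ⟨d * c, by rw [hd, hc, smul_smul]⟩

/-- The projective Hilbert space `ℙ𝓗`: the space of rays (one-dimensional subspaces). -/
def ProjH (H : Type*) [NormedAddCommGroup H] [InnerProductSpace ℂ H] :=
  Quotient (projSetoid H)

/-- The canonical projection `p : 𝓗∖{0} → ℙ𝓗`, `Ψ ↦ ℂΨ`. -/
def ProjH.mk {H : Type*} [NormedAddCommGroup H] [InnerProductSpace ℂ H]
    (v : {v : H // v ≠ 0}) : ProjH H :=
  Quotient.mk (projSetoid H) v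

/-! For unit vectors `‖Ψ - λΩ‖² = 2 - 2 Re (λ⟨Ψ, Ω⟩)`, and the phase `λ` turning `⟨Ψ, Ω⟩` into
`|⟨Ψ, Ω⟩|` attains the infimum `2 - 2 |⟨Ψ, Ω⟩|`. Composing optimal phases gives the triangle
inequality. Attainment also says that the projection of the unit sphere onto `ℙ𝓗` is a
submetry: any ray `q` has a unit representative at distance `d(ℂΨ, q)` from a given unit `Ψ`.
Lifting balls this way makes the projection an open quotient map, so the metric topology is the
quotient topology, and lifting fast Cauchy sequences step by step transfers completeness from the
sphere to `ℙ𝓗`. -/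

open Function Metric Topology

section LiftingDistances

variable {X Y : Type*} [PseudoMetricSpace X] [PseudoMetricSpace Y] {f : X → Y}

theorem isOpenMap_of_forall_exists_dist_le
    (hlift : ∀ x y, ∃ x', f x' = y ∧ dist x x' ≤ dist (f x) y) : IsOpenMap f := by
  intro U hU
  rw [Metric.isOpen_iff]
  rintro _ ⟨x, hxU, rfl⟩
  obtain ⟨δ, hδ, hball⟩ := Metric.isOpen_iff.1 hU x hxU
  refine ⟨δ, hδ, fun y hy => ?_⟩
  obtain ⟨x', rfl, hx'⟩ := hlift x y
  refine ⟨x', hball ?_, rfl⟩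
  rw [mem_ball, dist_comm] at hy ⊢
  exact hx'.trans_lt hy

theorem completeSpace_of_forall_exists_dist_le [CompleteSpace X] (hf : Continuous f)
    (hsurj : Surjective f) (hlift : ∀ x y, ∃ x', f x' = y ∧ dist x x' ≤ dist (f x) y) :
    CompleteSpace Y := by
  refine Metric.complete_of_convergent_controlled_sequences (fun n => (1 / 2) ^ n)
    (fun n => by positivity) fun u hu => ?_
  choose lift hlift_eq hlift_dist using hlift
  obtain ⟨x₀, hx₀⟩ := hsurj (u 0)
  let x : ℕ → X := fun n => Nat.rec x₀ (fun n xn => lift xn (u (n + 1))) n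
  have hx : ∀ n, f (x n) = u n
    | 0 => hx₀
    | n + 1 => hlift_eq _ _
  have hcauchy : CauchySeq x := by
    refine cauchySeq_of_le_geometric (1 / 2) 1 (by norm_num) fun n => ?_
    calc dist (x n) (x (n + 1)) ≤ dist (u n) (u (n + 1)) := hx n ▸ hlift_dist _ _
      _ ≤ 1 * (1 / 2) ^ n := by rw [one_mul]; exact (hu n n (n + 1) le_rfl n.le_succ).le
  obtain ⟨l, hl⟩ := cauchySeq_tendsto_of_complete hcauchy
  exact ⟨f l, funext hx ▸ (hf.tendsto l).comp hl⟩

end LiftingDistances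

theorem Complex.exists_norm_eq_one_mul_eq_norm (z : ℂ) : ∃ c : ℂ, ‖c‖ = 1 ∧ c * z = ‖z‖ := by
  refine ⟨exp (↑(-z.arg) * I), norm_exp_ofReal_mul_I _, ?_⟩
  conv_lhs => rw [← norm_mul_exp_arg_mul_I z]
  rw [mul_left_comm, ← exp_add]
  push_cast
  simp

section ChordDistance

variable {H : Type*} [NormedAddCommGroup H] [InnerProductSpace ℂ H]

def rayProduct (x y : H) : ℝ := ‖(inner ℂ x y : ℂ)‖ / (‖x‖ * ‖y‖)

theorem rayProduct_le_one (x y : H) : rayProduct x y ≤ 1 :=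
  div_le_one_of_le₀ (norm_inner_le_norm x y) (by positivity)

theorem rayProduct_comm (x y : H) : rayProduct x y = rayProduct y x := by
  rw [rayProduct, rayProduct, ← inner_conj_symm, RCLike.norm_conj, mul_comm]

theorem rayProduct_smul_left {c : ℂ} (hc : c ≠ 0) (x y : H) :
    rayProduct (c • x) y = rayProduct x y := by
  rw [rayProduct, rayProduct, inner_smul_left, norm_mul, norm_smul, RCLike.norm_conj, mul_assoc,
    mul_div_mul_left _ _ (norm_ne_zero_iff.2 hc)]

theorem rayProduct_smul_right {c : ℂ} (hc : c ≠ 0) (x y : H) :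
    rayProduct x (c • y) = rayProduct x y := by
  rw [rayProduct_comm, rayProduct_smul_left hc, rayProduct_comm]

theorem rayProduct_self {x : H} (hx : x ≠ 0) : rayProduct x x = 1 := by
  rw [rayProduct, inner_self_eq_norm_sq_to_K, norm_pow, RCLike.norm_ofReal, abs_norm, ← sq,
    div_self (by positivity)]

theorem rayProduct_of_norm_eq_one {u w : H} (hu : ‖u‖ = 1) (hw : ‖w‖ = 1) :
    rayProduct u w = ‖(inner ℂ u w : ℂ)‖ := by
  rw [rayProduct, hu, hw, mul_one, div_one]

def chordDist (x y : H) : ℝ := √(2 - 2 * rayProduct x y)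

theorem chordDist_sq (x y : H) : chordDist x y ^ 2 = 2 - 2 * rayProduct x y :=
  Real.sq_sqrt (by linarith [rayProduct_le_one x y])

theorem chordDist_comm (x y : H) : chordDist x y = chordDist y x := by
  rw [chordDist, chordDist, rayProduct_comm]

theorem chordDist_smul_left {c : ℂ} (hc : c ≠ 0) (x y : H) :
    chordDist (c • x) y = chordDist x y := by
  rw [chordDist, chordDist, rayProduct_smul_left hc]

theorem chordDist_smul_right {c : ℂ} (hc : c ≠ 0) (x y : H) :
    chordDist x (c • y) = chordDist x y := by
  rw [chordDist, chordDist, rayProduct_smul_right hc]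

theorem chordDist_self {x : H} (hx : x ≠ 0) : chordDist x x = 0 := by
  rw [chordDist, rayProduct_self hx]; norm_num

theorem exists_eq_smul_of_chordDist_eq_zero {x y : H} (hx : x ≠ 0) (hy : y ≠ 0)
    (h : chordDist x y = 0) : ∃ c : ℂ, y = c • x := by
  have h1 : rayProduct x y = 1 := by linarith [chordDist_sq x y, h ▸ zero_pow two_ne_zero]
  rw [rayProduct, div_eq_one_iff_eq (by positivity)] at h1
  obtain ⟨c, -, hc⟩ := (norm_inner_eq_norm_iff hx hy).1 h1
  exact ⟨c, hc⟩

theorem norm_sub_smul_sq_of_norm_eq_one {u w : H} (hu : ‖u‖ = 1) (hw : ‖w‖ = 1) {c : ℂ}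
    (hc : ‖c‖ = 1) : ‖u - c • w‖ ^ 2 = 2 - 2 * (c * inner ℂ u w).re := by
  rw [@norm_sub_sq ℂ, inner_smul_right, norm_smul, hc, hu, hw]
  simp only [RCLike.re_to_complex]
  ring

theorem chordDist_le_norm_sub_smul {u w : H} (hu : ‖u‖ = 1) (hw : ‖w‖ = 1) {c : ℂ}
    (hc : ‖c‖ = 1) : chordDist u w ≤ ‖u - c • w‖ := by
  rw [← Real.sqrt_sq (norm_nonneg (u - c • w)), norm_sub_smul_sq_of_norm_eq_one hu hw hc,
    chordDist, rayProduct_of_norm_eq_one hu hw]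
  gcongr
  calc (c * inner ℂ u w).re ≤ ‖c * inner ℂ u w‖ := Complex.re_le_norm _
    _ = ‖(inner ℂ u w : ℂ)‖ := by rw [norm_mul, hc, one_mul]

theorem exists_norm_sub_smul_eq_chordDist {u w : H} (hu : ‖u‖ = 1) (hw : ‖w‖ = 1) :
    ∃ c : ℂ, ‖c‖ = 1 ∧ ‖u - c • w‖ = chordDist u w := by
  obtain ⟨c, hc, hcz⟩ := Complex.exists_norm_eq_one_mul_eq_norm (inner ℂ u w)
  refine ⟨c, hc, ?_⟩
  rw [← Real.sqrt_sq (norm_nonneg (u - c • w)), norm_sub_smul_sq_of_norm_eq_one hu hw hc, hcz,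
    Complex.ofReal_re, chordDist, rayProduct_of_norm_eq_one hu hw]

theorem chordDist_eq_iInf {u w : H} (hu : ‖u‖ = 1) (hw : ‖w‖ = 1) :
    chordDist u w = ⨅ c : sphere (0 : ℂ) 1, ‖u - (c : ℂ) • w‖ := by
  obtain ⟨c, hc, hmin⟩ := exists_norm_sub_smul_eq_chordDist hu hw
  have hleast : IsLeast (Set.range fun c : sphere (0 : ℂ) 1 => ‖u - (c : ℂ) • w‖)
      (chordDist u w) := by
    refine ⟨⟨⟨c, mem_sphere_zero_iff_norm.2 hc⟩, hmin⟩, ?_⟩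
    rintro _ ⟨c', rfl⟩
    exact chordDist_le_norm_sub_smul hu hw (mem_sphere_zero_iff_norm.1 c'.2)
  exact hleast.csInf_eq.symm

theorem chordDist_triangle_of_norm_eq_one {u v w : H} (hu : ‖u‖ = 1) (hv : ‖v‖ = 1)
    (hw : ‖w‖ = 1) : chordDist u w ≤ chordDist u v + chordDist v w := by
  obtain ⟨c, hc, huv⟩ := exists_norm_sub_smul_eq_chordDist hu hv
  obtain ⟨d, hd, hvw⟩ := exists_norm_sub_smul_eq_chordDist hv hw
  calc chordDist u w ≤ ‖u - (c * d) • w‖ :=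
        chordDist_le_norm_sub_smul hu hw (by rw [norm_mul, hc, hd, one_mul])
    _ ≤ ‖u - c • v‖ + ‖c • v - (c * d) • w‖ := norm_sub_le_norm_sub_add_norm_sub _ _ _
    _ = chordDist u v + chordDist v w := by
        rw [huv, ← hvw, ← smul_smul, ← smul_sub, norm_smul, hc, one_mul]

theorem chordDist_inv_norm_smul {x y : H} (hx : x ≠ 0) (hy : y ≠ 0) :
    chordDist ((‖x‖⁻¹ : ℂ) • x) ((‖y‖⁻¹ : ℂ) • y) = chordDist x y := by
  rw [chordDist_smul_left (by simpa using hx), chordDist_smul_right (by simpa using hy)]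

theorem chordDist_triangle {x y z : H} (hx : x ≠ 0) (hy : y ≠ 0) (hz : z ≠ 0) :
    chordDist x z ≤ chordDist x y + chordDist y z := by
  have hunit {v : H} (hv : v ≠ 0) : ‖(‖v‖⁻¹ : ℂ) • v‖ = 1 := norm_smul_inv_norm hv
  have := chordDist_triangle_of_norm_eq_one (hunit hx) (hunit hy) (hunit hz)
  rwa [chordDist_inv_norm_smul hx hz, chordDist_inv_norm_smul hx hy,
    chordDist_inv_norm_smul hy hz] at this

def unitVector (a : {v : H // v ≠ 0}) : sphere (0 : H) 1 :=
  ⟨(‖(a : H)‖⁻¹ : ℂ) • (a : H), mem_sphere_zero_iff_norm.2 (norm_smul_inv_norm a.2)⟩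

theorem continuous_unitVector : Continuous (unitVector : {v : H // v ≠ 0} → _) := by
  refine Continuous.subtype_mk (Continuous.smul ?_ continuous_subtype_val) _
  exact (Complex.continuous_ofReal.comp continuous_subtype_val.norm).inv₀ fun a => by
    simpa using a.2

end ChordDistance

namespace ProjH

variable {H : Type*} [NormedAddCommGroup H] [InnerProductSpace ℂ H]

theorem mk_eq_mk_of_eq_smul {a b : {v : H // v ≠ 0}} (c : ℂ) (h : (b : H) = c • (a : H)) :
    mk a = mk b :=
  Quotient.sound ⟨c, h⟩

instance : MetricSpace (ProjH H) where
  dist := Quotient.lift₂ (fun a b : {v : H // v ≠ 0} => chordDist (a : H) b) <| by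
    rintro a₁ b₁ a₂ b₂ ⟨c, hc⟩ ⟨d, hd⟩
    have hc0 : c ≠ 0 := by rintro rfl; exact a₂.2 (by rw [hc, zero_smul])
    have hd0 : d ≠ 0 := by rintro rfl; exact b₂.2 (by rw [hd, zero_smul])
    simp only [hc, hd, chordDist_smul_left hc0, chordDist_smul_right hd0]
  dist_self q := Quotient.inductionOn q fun a => chordDist_self a.2
  dist_comm q r := Quotient.inductionOn₂ q r fun a b => chordDist_comm (a : H) b
  dist_triangle q r s := Quotient.inductionOn₃ q r s fun a b c => chordDist_triangle a.2 b.2 c.2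
  eq_of_dist_eq_zero {q r} := Quotient.inductionOn₂ q r fun a b h =>
    Quotient.sound (exists_eq_smul_of_chordDist_eq_zero a.2 b.2 h)

def ofSphere (v : sphere (0 : H) 1) : ProjH H :=
  mk ⟨v, ne_zero_of_mem_unit_sphere v⟩

theorem ofSphere_unitVector (a : {v : H // v ≠ 0}) : ofSphere (unitVector a) = mk a :=
  (mk_eq_mk_of_eq_smul (‖(a : H)‖⁻¹ : ℂ) rfl).symm

theorem ofSphere_surjective : Surjective (ofSphere : sphere (0 : H) 1 → ProjH H) :=
  fun q => Quotient.inductionOn q fun a => ⟨unitVector a, ofSphere_unitVector a⟩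

theorem lipschitzWith_one_ofSphere : LipschitzWith 1 (ofSphere : sphere (0 : H) 1 → ProjH H) :=
  LipschitzWith.of_dist_le_mul fun v w => by
    rw [NNReal.coe_one, one_mul, Subtype.dist_eq, dist_eq_norm, ← one_smul ℂ (w : H)]
    exact chordDist_le_norm_sub_smul (norm_eq_of_mem_sphere v) (norm_eq_of_mem_sphere w) norm_one

theorem exists_ofSphere_eq_dist_le (v : sphere (0 : H) 1) (q : ProjH H) :
    ∃ w, ofSphere w = q ∧ dist v w ≤ dist (ofSphere v) q := by
  obtain ⟨a, rfl⟩ := ofSphere_surjective q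
  obtain ⟨c, hc, hmin⟩ := exists_norm_sub_smul_eq_chordDist (norm_eq_of_mem_sphere v)
    (norm_eq_of_mem_sphere a)
  refine ⟨⟨c • (a : H), by simp [norm_smul, hc]⟩, mk_eq_mk_of_eq_smul c rfl |>.symm, ?_⟩
  rw [Subtype.dist_eq, dist_eq_norm, hmin]
  rfl

theorem isQuotientMap_ofSphere : IsQuotientMap (ofSphere : sphere (0 : H) 1 → ProjH H) :=
  (isOpenMap_of_forall_exists_dist_le exists_ofSphere_eq_dist_le).isQuotientMap
    lipschitzWith_one_ofSphere.continuous ofSphere_surjective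

theorem isQuotientMap_mk : IsQuotientMap (mk : {v : H // v ≠ 0} → ProjH H) := by
  have hmk : Continuous (mk : {v : H // v ≠ 0} → ProjH H) := by
    rw [← funext (ofSphere_unitVector (H := H))]
    exact lipschitzWith_one_ofSphere.continuous.comp continuous_unitVector
  have hincl : Continuous fun v : sphere (0 : H) 1 =>
      (⟨v, ne_zero_of_mem_unit_sphere v⟩ : {v : H // v ≠ 0}) :=
    continuous_subtype_val.subtype_mk _
  exact .of_comp hincl hmk isQuotientMap_ofSphere

instance [CompleteSpace H] : CompleteSpace (ProjH H) :=
  haveI : CompleteSpace (sphere (0 : H) 1) := isClosed_sphere.completeSpace_coe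
  completeSpace_of_forall_exists_dist_le lipschitzWith_one_ofSphere.continuous
    ofSphere_surjective exists_ofSphere_eq_dist_le

end ProjH

theorem chord_metric_general (H : Type*) [NormedAddCommGroup H] [InnerProductSpace ℂ H]
    [CompleteSpace H] :
    ∃ m : MetricSpace (ProjH H),
      -- defining formula: on unit representatives, dist is inf over U(1) of ‖Ψ − λΩ‖
      (∀ Ψ Ω : {v : H // v ≠ 0}, ‖(Ψ : H)‖ = 1 → ‖(Ω : H)‖ = 1 →
        m.dist (ProjH.mk Ψ) (ProjH.mk Ω)
          = ⨅ lam : Metric.sphere (0 : ℂ) 1, ‖(Ψ : H) - (lam : ℂ) • (Ω : H)‖) ∧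
      -- the chord metric is complete
      @CompleteSpace (ProjH H) m.toUniformSpace ∧
      -- the chord metric induces the quotient topology on ℙ𝓗
      m.toUniformSpace.toTopologicalSpace
        = TopologicalSpace.coinduced (ProjH.mk (H := H)) inferInstance ∧
      -- d_chd(ℂΨ, ℂΩ)² = 2 − 2⟪ℂΨ, ℂΩ⟫ for all nonzero Ψ, Ω
      (∀ Ψ Ω : {v : H // v ≠ 0},
        m.dist (ProjH.mk Ψ) (ProjH.mk Ω) ^ 2
          = 2 - 2 * (‖(inner ℂ (Ψ : H) (Ω : H) : ℂ)‖ / (‖(Ψ : H)‖ * ‖(Ω : H)‖))) :=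
  ⟨inferInstance, fun _ _ hΨ hΩ => chordDist_eq_iInf hΨ hΩ, inferInstance,
    ProjH.isQuotientMap_mk.eq_coinduced, fun Ψ Ω => chordDist_sq (Ψ : H) Ω⟩

/-- The chord metric on projective Hilbert space: there is a metric on `ℙ𝓗` given on rays
with unit representatives `Ψ, Ω` by `inf_{λ ∈ U(1)} ‖Ψ − λΩ‖`; it is complete, it induces the
quotient topology on `ℙ𝓗`, and its square equals `2 − 2⟪ℂΨ, ℂΩ⟫` where `⟪·,·⟫` is the
ray product `|⟨Ψ,Ω⟩| / (‖Ψ‖‖Ω‖)`. -/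
theorem chord_metric (H : Type*) [NormedAddCommGroup H] [InnerProductSpace ℂ H]
    [CompleteSpace H] [Nontrivial H] :
    ∃ m : MetricSpace (ProjH H),
      -- defining formula: on unit representatives, dist is inf over U(1) of ‖Ψ − λΩ‖
      (∀ Ψ Ω : {v : H // v ≠ 0}, ‖(Ψ : H)‖ = 1 → ‖(Ω : H)‖ = 1 →
        m.dist (ProjH.mk Ψ) (ProjH.mk Ω)
          = ⨅ lam : Metric.sphere (0 : ℂ) 1, ‖(Ψ : H) - (lam : ℂ) • (Ω : H)‖) ∧
      -- the chord metric is complete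
      @CompleteSpace (ProjH H) m.toUniformSpace ∧
      -- the chord metric induces the quotient topology on ℙ𝓗
      m.toUniformSpace.toTopologicalSpace
        = TopologicalSpace.coinduced (ProjH.mk (H := H)) inferInstance ∧
      -- d_chd(ℂΨ, ℂΩ)² = 2 − 2⟪ℂΨ, ℂΩ⟫ for all nonzero Ψ, Ω
      (∀ Ψ Ω : {v : H // v ≠ 0},
        m.dist (ProjH.mk Ψ) (ProjH.mk Ω) ^ 2
          = 2 - 2 * (‖(inner ℂ (Ψ : H) (Ω : H) : ℂ)‖ / (‖(Ψ : H)‖ * ‖(Ω : H)‖))) :=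
  chord_metric_general H

end
end

section
/- Let 𝓗 be a nonzero complex Hilbert space and for each ray let P(ℂΨ) denote the orthogonal projection of 𝓗 onto ℂΨ. The gap metric d_gap(ℂΨ, ℂΩ) = ‖P(ℂΨ) − P(ℂΩ)‖ (operator norm) is a metric on ℙ𝓗, and for all Ψ, Ω ∈ 𝓗∖{0}: (1/√2) d_chd(ℂΨ, ℂΩ) ≤ d_gap(ℂΨ, ℂΩ) = √(1 − ⟪ℂΨ, ℂΩ⟫²) ≤ d_chd(ℂΨ, ℂΩ). In particular, the map P : ℙ𝓗 → 𝓑(𝓗) sending a ray to the orthogonal projection onto it is a homeomorphism onto the space of rank-one orthogonal projections with the operator-norm topology. -/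
noncomputable section

/-- `ℙ𝓗` carries the quotient topology induced by the canonical projection. -/
instance (H : Type*) [NormedAddCommGroup H] [InnerProductSpace ℂ H] :
    TopologicalSpace (ProjH H) :=
  TopologicalSpace.coinduced ProjH.mk inferInstance

/-- For a unit vector `Ψ`, the orthogonal projection `|Ψ⟩⟨Ψ| : x ↦ ⟨Ψ, x⟩ Ψ` onto `ℂΨ`. -/
def rankOneProj {H : Type*} [NormedAddCommGroup H] [InnerProductSpace ℂ H] (Ψ : H) :
    H →L[ℂ] H :=
  (innerSL ℂ Ψ).smulRight Ψ

/-!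
For unit vectors `Ψ, Ω` put `g = ⟪Ψ, Ω⟫` and `w = Ω - g Ψ ⊥ Ψ`, so `‖w‖² = 1 - |g|²`. Then
`‖(P Ψ - P Ω) x‖² = (1 - |g|²) |⟪Ψ, x⟫|² + |⟪w, x - ⟪Ψ, x⟫ Ψ⟫|²`, and Cauchy–Schwarz bounds this
by `(1 - |g|²) ‖x‖²`, with equality at `x = Ψ`; hence `d_gap = √(1 - |g|²)`.
For `|c| = 1` one has `‖Ψ - c Ω‖² = 2 - 2 Re (c g)`, which is minimal, equal to `2 - 2|g|`, when
`c g = |g|`. The comparison with the chord metric is then `1 - t ≤ 1 - t² ≤ 2 (1 - t)` for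
`t = |g| ∈ [0, 1]`.
`P` is continuous and injective, and its inverse on the image is continuous as well: for a fixed
`x`, the ray of `P A` is `ℂ (P A x)` whenever `P A x ≠ 0`, an open condition on `P A`.
-/

section

open InnerProductSpace Topology
open scoped InnerProductSpace ComplexConjugate

variable {H : Type*} [NormedAddCommGroup H] [InnerProductSpace ℂ H]

lemma rankOneProj_apply (Ψ x : H) : rankOneProj Ψ x = ⟪Ψ, x⟫_ℂ • Ψ := rfl

lemma continuous_rankOneProj : Continuous (rankOneProj : H → H →L[ℂ] H) :=
  ((ContinuousLinearMap.smulRightL ℂ H H).continuous.comp (innerSL ℂ).continuous).clm_apply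
    continuous_id

lemma rankOneProj_smul_of_norm_eq_one {c : ℂ} (hc : ‖c‖ = 1) (Ψ : H) :
    rankOneProj (c • Ψ) = rankOneProj Ψ := by
  have hcc : conj c * c = 1 := by rw [Complex.conj_mul', hc]; simp
  ext x
  rw [rankOneProj_apply, rankOneProj_apply, inner_smul_left, smul_smul]
  congr 1
  linear_combination ⟪Ψ, x⟫_ℂ * hcc

lemma norm_sq_rankOneProj_sub_apply {Ψ Ω : H} (hΨ : ‖Ψ‖ = 1) (hΩ : ‖Ω‖ = 1) (x : H) :
    ‖(rankOneProj Ψ - rankOneProj Ω) x‖ ^ 2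
      = (1 - ‖⟪Ψ, Ω⟫_ℂ‖ ^ 2) * ‖⟪Ψ, x⟫_ℂ‖ ^ 2 + ‖⟪Ω - ⟪Ψ, Ω⟫_ℂ • Ψ, x⟫_ℂ‖ ^ 2 := by
  set g := ⟪Ψ, Ω⟫_ℂ
  set a := ⟪Ψ, x⟫_ℂ
  have hsq (v : H) : ((‖v‖ : ℂ)) ^ 2 = ⟪v, v⟫_ℂ := (inner_self_eq_norm_sq_to_K v).symm
  have hΩΨ : ⟪Ω, Ψ⟫_ℂ = conj g := (inner_conj_symm _ _).symm
  have hd : ⟪Ω - g • Ψ, x⟫_ℂ = ⟪Ω, x⟫_ℂ - conj g * a := by rw [inner_sub_left, inner_smul_left]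
  apply Complex.ofReal_injective
  push_cast
  rw [hd, hsq, ← Complex.conj_mul' g, ← Complex.conj_mul' a,
    ← Complex.conj_mul' (_ - _)]
  simp only [Pi.sub_apply, rankOneProj_apply, inner_sub_left, inner_sub_right, inner_smul_left,
    inner_smul_right, inner_self_eq_one_of_norm_eq_one hΨ,
    inner_self_eq_one_of_norm_eq_one hΩ, hΩΨ, map_sub, map_mul, RCLike.conj_conj]
  ring

lemma inner_sub_inner_smul_eq_zero {Ψ : H} (hΨ : ‖Ψ‖ = 1) (x : H) :
    ⟪Ψ, x - ⟪Ψ, x⟫_ℂ • Ψ⟫_ℂ = 0 := by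
  rw [inner_sub_right, inner_smul_right, inner_self_eq_one_of_norm_eq_one hΨ, mul_one, sub_self]

lemma norm_sub_inner_smul_sq {Ψ : H} (hΨ : ‖Ψ‖ = 1) (x : H) :
    ‖x - ⟪Ψ, x⟫_ℂ • Ψ‖ ^ 2 = ‖x‖ ^ 2 - ‖⟪Ψ, x⟫_ℂ‖ ^ 2 := by
  have h := norm_add_sq_eq_norm_sq_add_norm_sq_of_inner_eq_zero (𝕜 := ℂ) (⟪Ψ, x⟫_ℂ • Ψ)
    (x - ⟪Ψ, x⟫_ℂ • Ψ) (by rw [inner_smul_left, inner_sub_inner_smul_eq_zero hΨ, mul_zero])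
  rw [add_sub_cancel, norm_smul, hΨ, mul_one] at h
  linarith

lemma norm_inner_le_one {Ψ Ω : H} (hΨ : ‖Ψ‖ = 1) (hΩ : ‖Ω‖ = 1) : ‖⟪Ψ, Ω⟫_ℂ‖ ≤ 1 := by
  simpa [hΨ, hΩ] using norm_inner_le_norm (𝕜 := ℂ) Ψ Ω

theorem norm_rankOneProj_sub_rankOneProj {Ψ Ω : H} (hΨ : ‖Ψ‖ = 1) (hΩ : ‖Ω‖ = 1) :
    ‖rankOneProj Ψ - rankOneProj Ω‖ = √(1 - ‖⟪Ψ, Ω⟫_ℂ‖ ^ 2) := by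
  set g := ⟪Ψ, Ω⟫_ℂ
  set w := Ω - g • Ψ
  have hw : ‖w‖ ^ 2 = 1 - ‖g‖ ^ 2 := by
    rw [norm_sub_inner_smul_sq hΨ, hΩ, one_pow]
  apply le_antisymm
  · refine ContinuousLinearMap.opNorm_le_bound _ (Real.sqrt_nonneg _) fun x => ?_
    set a := ⟪Ψ, x⟫_ℂ
    have hwx : ⟪w, x⟫_ℂ = ⟪w, x - a • Ψ⟫_ℂ := by
      rw [inner_sub_right, inner_smul_right, ← inner_conj_symm w Ψ,
        inner_sub_inner_smul_eq_zero hΨ, map_zero, mul_zero, sub_zero]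
    have hCS : ‖⟪w, x⟫_ℂ‖ ^ 2 ≤ (1 - ‖g‖ ^ 2) * (‖x‖ ^ 2 - ‖a‖ ^ 2) := by
      rw [hwx, ← hw, ← norm_sub_inner_smul_sq hΨ, ← mul_pow]
      exact pow_le_pow_left₀ (norm_nonneg _) (norm_inner_le_norm _ _) 2
    rw [← Real.sqrt_sq (norm_nonneg ((rankOneProj Ψ - rankOneProj Ω) x)),
      ← Real.sqrt_sq (norm_nonneg x), ← Real.sqrt_mul (by linarith [sq_nonneg ‖w‖])]
    refine Real.sqrt_le_sqrt ?_
    rw [norm_sq_rankOneProj_sub_apply hΨ hΩ]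
    linarith
  · have hTΨ : (rankOneProj Ψ - rankOneProj Ω) Ψ = Ψ - ⟪Ω, Ψ⟫_ℂ • Ω := by
      simp [rankOneProj_apply, inner_self_eq_norm_sq_to_K, hΨ]
    have hnorm : ‖(rankOneProj Ψ - rankOneProj Ω) Ψ‖ = √(1 - ‖g‖ ^ 2) := by
      rw [← Real.sqrt_sq (norm_nonneg _), hTΨ, norm_sub_inner_smul_sq hΩ, hΨ, one_pow,
        norm_inner_symm]
    calc √(1 - ‖g‖ ^ 2) = ‖(rankOneProj Ψ - rankOneProj Ω) Ψ‖ := hnorm.symm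
      _ ≤ ‖rankOneProj Ψ - rankOneProj Ω‖ * ‖Ψ‖ := ContinuousLinearMap.le_opNorm _ _
      _ = ‖rankOneProj Ψ - rankOneProj Ω‖ := by rw [hΨ, mul_one]

lemma norm_sub_sq_of_norm_eq_one {Ψ Ω : H} (hΨ : ‖Ψ‖ = 1) (hΩ : ‖Ω‖ = 1) :
    ‖Ψ - Ω‖ ^ 2 = 2 - 2 * RCLike.re ⟪Ψ, Ω⟫_ℂ := by
  rw [@norm_sub_sq ℂ, hΨ, hΩ]
  ring

lemma norm_rankOneProj_sub_le_norm_sub {Ψ Ω : H} (hΨ : ‖Ψ‖ = 1) (hΩ : ‖Ω‖ = 1) :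
    ‖rankOneProj Ψ - rankOneProj Ω‖ ≤ ‖Ψ - Ω‖ := by
  rw [norm_rankOneProj_sub_rankOneProj hΨ hΩ, Real.sqrt_le_left (norm_nonneg _),
    norm_sub_sq_of_norm_eq_one hΨ hΩ]
  nlinarith [RCLike.re_le_norm ⟪Ψ, Ω⟫_ℂ, norm_inner_le_one hΨ hΩ]

lemma exists_norm_sub_smul_le {Ψ Ω : H} (hΨ : ‖Ψ‖ = 1) (hΩ : ‖Ω‖ = 1) :
    ∃ c : ℂ, ‖c‖ = 1 ∧ ‖Ψ - c • Ω‖ ≤ √2 * ‖rankOneProj Ψ - rankOneProj Ω‖ := by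
  -- the phase `c` that makes `⟪Ψ, c • Ω⟫` real and nonnegative
  obtain ⟨c, hc, hcg⟩ := Complex.exists_norm_eq_mul_self ⟪Ψ, Ω⟫_ℂ
  refine ⟨c, hc, ?_⟩
  have hcΩ : ‖c • Ω‖ = 1 := by rw [norm_smul, hc, hΩ, one_mul]
  rw [norm_rankOneProj_sub_rankOneProj hΨ hΩ, ← Real.sqrt_mul zero_le_two,
    Real.le_sqrt (norm_nonneg _) (by nlinarith [norm_inner_le_one hΨ hΩ, norm_nonneg ⟪Ψ, Ω⟫_ℂ]),
    norm_sub_sq_of_norm_eq_one hΨ hcΩ, inner_smul_right, ← hcg, RCLike.re_to_complex,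
    Complex.ofReal_re]
  nlinarith [norm_inner_le_one hΨ hΩ, norm_nonneg ⟪Ψ, Ω⟫_ℂ]

lemma norm_rankOneProj_sub_le_iInf {Ψ Ω : H} (hΨ : ‖Ψ‖ = 1) (hΩ : ‖Ω‖ = 1) :
    ‖rankOneProj Ψ - rankOneProj Ω‖ ≤ ⨅ c : Metric.sphere (0 : ℂ) 1, ‖Ψ - (c : ℂ) • Ω‖ :=
  le_ciInf fun c => by
    have hc : ‖(c : ℂ)‖ = 1 := by simp
    rw [← rankOneProj_smul_of_norm_eq_one hc Ω]
    exact norm_rankOneProj_sub_le_norm_sub hΨ (by rw [norm_smul, hc, hΩ, one_mul])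

lemma iInf_le_sqrt_two_mul_norm_rankOneProj_sub {Ψ Ω : H} (hΨ : ‖Ψ‖ = 1) (hΩ : ‖Ω‖ = 1) :
    ⨅ c : Metric.sphere (0 : ℂ) 1, ‖Ψ - (c : ℂ) • Ω‖
      ≤ √2 * ‖rankOneProj Ψ - rankOneProj Ω‖ := by
  obtain ⟨c, hc, hle⟩ := exists_norm_sub_smul_le hΨ hΩ
  refine (ciInf_le ⟨0, ?_⟩ (⟨c, by simpa using hc⟩ : Metric.sphere (0 : ℂ) 1)).trans hle
  rintro _ ⟨_, rfl⟩
  positivity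

lemma inv_norm_smul_smul (c : ℂ) (Ψ : H) :
    (‖c • Ψ‖ : ℂ)⁻¹ • c • Ψ = (c / ‖c‖) • (‖Ψ‖ : ℂ)⁻¹ • Ψ := by
  rw [norm_smul, smul_smul, smul_smul, Complex.ofReal_mul, mul_inv]
  ring_nf

lemma norm_inner_inv_norm_smul (Ψ Ω : H) :
    ‖⟪(‖Ψ‖ : ℂ)⁻¹ • Ψ, (‖Ω‖ : ℂ)⁻¹ • Ω⟫_ℂ‖ = ‖⟪Ψ, Ω⟫_ℂ‖ / (‖Ψ‖ * ‖Ω‖) := by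
  simp only [inner_smul_left, inner_smul_right, norm_mul, norm_inv, RCLike.norm_conj,
    Complex.norm_real, norm_norm]
  ring

-- `norm_smul_inv_norm` is stated with the `RCLike` coercion, which `rw` does not match with
-- `Complex.ofReal`.
lemma norm_inv_norm_smul {Ψ : H} (hΨ : Ψ ≠ 0) : ‖(‖Ψ‖ : ℂ)⁻¹ • Ψ‖ = 1 :=
  norm_smul_inv_norm hΨ

namespace ProjH

/-- The map `P : ℙ𝓗 → 𝓑(𝓗)`, evaluated on the normalized representative. -/
def proj : ProjH H → H →L[ℂ] H :=
  Quotient.lift (fun Ψ => rankOneProj ((‖(Ψ : H)‖ : ℂ)⁻¹ • (Ψ : H))) fun Ψ Ω ⟨c, hc⟩ => by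
    have hc0 : c ≠ 0 := by rintro rfl; exact Ω.2 (by simpa using hc)
    simp only [hc, inv_norm_smul_smul]
    refine (rankOneProj_smul_of_norm_eq_one ?_ _).symm
    simp [hc0]

lemma proj_mk (Ψ : {v : H // v ≠ 0}) :
    proj (mk Ψ) = rankOneProj ((‖(Ψ : H)‖ : ℂ)⁻¹ • (Ψ : H)) := rfl

lemma proj_mk_of_norm_eq_one {Ψ : {v : H // v ≠ 0}} (hΨ : ‖(Ψ : H)‖ = 1) :
    proj (mk Ψ) = rankOneProj (Ψ : H) := by
  simp [proj_mk, hΨ]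

lemma mk_proj_apply (A : ProjH H) (x : H) (h : proj A x ≠ 0) : mk ⟨proj A x, h⟩ = A := by
  induction A using Quotient.inductionOn with | h Ψ => ?_
  refine (Quotient.sound (show (projSetoid H).r Ψ ⟨_, h⟩ from
    ⟨⟪(‖(Ψ : H)‖ : ℂ)⁻¹ • (Ψ : H), x⟫_ℂ * (‖(Ψ : H)‖ : ℂ)⁻¹, ?_⟩)).symm
  rw [← smul_smul]
  rfl

lemma exists_proj_apply_ne_zero (A : ProjH H) : ∃ x, proj A x ≠ 0 := by
  by_contra! h
  induction A using Quotient.inductionOn with | h Ψ => ?_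
  have hu : (‖(Ψ : H)‖ : ℂ)⁻¹ • (Ψ : H) ≠ 0 := by simpa using Ψ.2
  exact rankOne_ne_zero hu hu (ContinuousLinearMap.ext h)

lemma proj_injective : Function.Injective (proj : ProjH H → H →L[ℂ] H) := by
  intro A B hAB
  obtain ⟨x, hx⟩ := exists_proj_apply_ne_zero A
  rw [← mk_proj_apply A x hx, ← mk_proj_apply B x (hAB ▸ hx)]
  simp only [hAB]

lemma continuous_proj : Continuous (proj : ProjH H → H →L[ℂ] H) := by
  refine continuous_coinduced_dom.2 (continuous_rankOneProj.comp ?_)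
  exact ((Complex.continuous_ofReal.comp (continuous_norm.comp continuous_subtype_val)).inv₀
    fun Ψ => by simpa using Ψ.2).smul continuous_subtype_val


lemma exists_isOpen_proj_preimage_subset {U : Set (ProjH H)} (hU : IsOpen U) {A : ProjH H}
    (hA : A ∈ U) : ∃ V : Set (H →L[ℂ] H), IsOpen V ∧ proj A ∈ V ∧ proj ⁻¹' V ⊆ U := by
  obtain ⟨x, hx⟩ := exists_proj_apply_ne_zero A
  refine ⟨(fun T => T x) ⁻¹' (Subtype.val '' (mk ⁻¹' U)), ?_,
    ⟨⟨_, hx⟩, by rwa [Set.mem_preimage, mk_proj_apply], rfl⟩, ?_⟩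
  · exact (isOpen_ne.isOpenMap_subtype_val _ (isOpen_coinduced.1 hU)).preimage
      (continuous_id.clm_apply continuous_const)
  · rintro B ⟨v, hv, hvB : (v : H) = proj B x⟩
    have hBx : proj B x ≠ 0 := hvB ▸ v.2
    rwa [Set.mem_preimage, show v = ⟨proj B x, hBx⟩ from Subtype.ext hvB, mk_proj_apply] at hv

theorem isEmbedding_proj : IsEmbedding (proj : ProjH H → H →L[ℂ] H) := by
  refine ⟨isInducing_iff_nhds.2 fun A => (continuous_proj.tendsto A).le_comap.antisymm ?_,
    proj_injective⟩
  intro U hU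
  obtain ⟨U', hU'U, hU', hAU'⟩ := mem_nhds_iff.1 hU
  obtain ⟨V, hV, hAV, hVU'⟩ := exists_isOpen_proj_preimage_subset hU' hAU'
  exact Filter.mem_comap.2 ⟨V, hV.mem_nhds hAV, hVU'.trans hU'U⟩

theorem range_proj :
    Set.range proj = {T : H →L[ℂ] H | ∃ Ψ : H, ‖Ψ‖ = 1 ∧ T = rankOneProj Ψ} := by
  ext T
  constructor
  · rintro ⟨A, rfl⟩
    induction A using Quotient.inductionOn with
    | h Ψ => exact ⟨_, norm_inv_norm_smul Ψ.2, rfl⟩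
  · rintro ⟨Ψ, hΨ, rfl⟩
    exact ⟨mk ⟨Ψ, by rintro rfl; simp at hΨ⟩, proj_mk_of_norm_eq_one hΨ⟩

variable (H) in
abbrev gapMetric : MetricSpace (ProjH H) :=
  MetricSpace.induced proj proj_injective inferInstance

lemma gapMetric_dist (A B : ProjH H) : (gapMetric H).dist A B = ‖proj A - proj B‖ :=
  dist_eq_norm (proj A) (proj B)

theorem gapMetric_dist_mk (Ψ Ω : {v : H // v ≠ 0}) :
    (gapMetric H).dist (mk Ψ) (mk Ω)
      = √(1 - (‖⟪(Ψ : H), (Ω : H)⟫_ℂ‖ / (‖(Ψ : H)‖ * ‖(Ω : H)‖)) ^ 2) := by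
  rw [gapMetric_dist, proj_mk, proj_mk, norm_rankOneProj_sub_rankOneProj
    (norm_inv_norm_smul Ψ.2) (norm_inv_norm_smul Ω.2), norm_inner_inv_norm_smul]

lemma gapMetric_dist_mk_of_norm_eq_one {Ψ Ω : {v : H // v ≠ 0}} (hΨ : ‖(Ψ : H)‖ = 1)
    (hΩ : ‖(Ω : H)‖ = 1) :
    (gapMetric H).dist (mk Ψ) (mk Ω) = ‖rankOneProj (Ψ : H) - rankOneProj (Ω : H)‖ := by
  rw [gapMetric_dist, proj_mk_of_norm_eq_one hΨ, proj_mk_of_norm_eq_one hΩ]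

end ProjH

end

theorem gap_metric_general (H : Type*) [NormedAddCommGroup H] [InnerProductSpace ℂ H] :
    ∃ m : MetricSpace (ProjH H),
      -- defining formula on unit representatives
      (∀ Ψ Ω : {v : H // v ≠ 0}, ‖(Ψ : H)‖ = 1 → ‖(Ω : H)‖ = 1 →
        m.dist (ProjH.mk Ψ) (ProjH.mk Ω)
          = ‖rankOneProj (Ψ : H) - rankOneProj (Ω : H)‖) ∧
      -- d_gap = √(1 − ⟪ℂΨ, ℂΩ⟫²)
      (∀ Ψ Ω : {v : H // v ≠ 0},
        m.dist (ProjH.mk Ψ) (ProjH.mk Ω)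
          = Real.sqrt (1 - (‖(inner ℂ (Ψ : H) (Ω : H) : ℂ)‖ / (‖(Ψ : H)‖ * ‖(Ω : H)‖)) ^ 2)) ∧
      -- equivalence with the chord metric
      (∀ Ψ Ω : {v : H // v ≠ 0}, ‖(Ψ : H)‖ = 1 → ‖(Ω : H)‖ = 1 →
        (1 / Real.sqrt 2)
            * (⨅ lam : Metric.sphere (0 : ℂ) 1, ‖(Ψ : H) - (lam : ℂ) • (Ω : H)‖)
            ≤ m.dist (ProjH.mk Ψ) (ProjH.mk Ω) ∧
          m.dist (ProjH.mk Ψ) (ProjH.mk Ω)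
            ≤ ⨅ lam : Metric.sphere (0 : ℂ) 1, ‖(Ψ : H) - (lam : ℂ) • (Ω : H)‖) ∧
      -- P is a homeomorphism onto the rank-one orthogonal projections
      ∃ P : ProjH H → (H →L[ℂ] H),
        (∀ Ψ : {v : H // v ≠ 0}, ‖(Ψ : H)‖ = 1 → P (ProjH.mk Ψ) = rankOneProj (Ψ : H)) ∧
        Topology.IsEmbedding P ∧
        Set.range P = {T : H →L[ℂ] H | ∃ Ψ : H, ‖Ψ‖ = 1 ∧ T = rankOneProj Ψ} := by
  refine ⟨ProjH.gapMetric H, fun Ψ Ω => ProjH.gapMetric_dist_mk_of_norm_eq_one,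
    ProjH.gapMetric_dist_mk,
    fun Ψ Ω hΨ hΩ => ?_, ProjH.proj, fun Ψ => ProjH.proj_mk_of_norm_eq_one,
    ProjH.isEmbedding_proj, ProjH.range_proj⟩
  rw [ProjH.gapMetric_dist_mk_of_norm_eq_one hΨ hΩ, one_div, inv_mul_le_iff₀ (by positivity)]
  exact ⟨iInf_le_sqrt_two_mul_norm_rankOneProj_sub hΨ hΩ, norm_rankOneProj_sub_le_iInf hΨ hΩ⟩

/-- The gap metric `d_gap(ℂΨ, ℂΩ) = ‖P(ℂΨ) − P(ℂΩ)‖` is a metric on `ℙ𝓗`; it equals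
`√(1 − ⟪ℂΨ, ℂΩ⟫²)` and satisfies `(1/√2) d_chd ≤ d_gap ≤ d_chd`. In particular the map
`P : ℙ𝓗 → 𝓑(𝓗)` sending a ray to the orthogonal projection onto it is a homeomorphism
onto the set of rank-one orthogonal projections with the operator-norm topology. -/
theorem gap_metric (H : Type*) [NormedAddCommGroup H] [InnerProductSpace ℂ H]
    [CompleteSpace H] [Nontrivial H] :
    ∃ m : MetricSpace (ProjH H),
      -- defining formula on unit representatives
      (∀ Ψ Ω : {v : H // v ≠ 0}, ‖(Ψ : H)‖ = 1 → ‖(Ω : H)‖ = 1 →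
        m.dist (ProjH.mk Ψ) (ProjH.mk Ω)
          = ‖rankOneProj (Ψ : H) - rankOneProj (Ω : H)‖) ∧
      -- d_gap = √(1 − ⟪ℂΨ, ℂΩ⟫²)
      (∀ Ψ Ω : {v : H // v ≠ 0},
        m.dist (ProjH.mk Ψ) (ProjH.mk Ω)
          = Real.sqrt (1 - (‖(inner ℂ (Ψ : H) (Ω : H) : ℂ)‖ / (‖(Ψ : H)‖ * ‖(Ω : H)‖)) ^ 2)) ∧
      -- equivalence with the chord metric
      (∀ Ψ Ω : {v : H // v ≠ 0}, ‖(Ψ : H)‖ = 1 → ‖(Ω : H)‖ = 1 →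
        (1 / Real.sqrt 2)
            * (⨅ lam : Metric.sphere (0 : ℂ) 1, ‖(Ψ : H) - (lam : ℂ) • (Ω : H)‖)
            ≤ m.dist (ProjH.mk Ψ) (ProjH.mk Ω) ∧
          m.dist (ProjH.mk Ψ) (ProjH.mk Ω)
            ≤ ⨅ lam : Metric.sphere (0 : ℂ) 1, ‖(Ψ : H) - (lam : ℂ) • (Ω : H)‖) ∧
      -- P is a homeomorphism onto the rank-one orthogonal projections
      ∃ P : ProjH H → (H →L[ℂ] H),
        (∀ Ψ : {v : H // v ≠ 0}, ‖(Ψ : H)‖ = 1 → P (ProjH.mk Ψ) = rankOneProj (Ψ : H)) ∧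
        Topology.IsEmbedding P ∧
        Set.range P = {T : H →L[ℂ] H | ∃ Ψ : H, ‖Ψ‖ = 1 ∧ T = rankOneProj Ψ} :=
  gap_metric_general H

end
end

section
/- Let 𝓗 be a complex Hilbert space, let Ψ, Ω ∈ 𝕊𝓗, and let 𝓗_{Ψ,Ω} = span{Ψ, Ω}. The linear map U_{Ψ,Ω} : 𝓗_{Ψ,Ω} → 𝓗_{Ψ,Ω} defined by U_{Ψ,Ω}Φ = ⟨Ω,Ψ⟩Φ − ⟨Ω,Φ⟩Ψ + ⟨Ψ,Φ⟩Ω is unitary (it preserves inner products and is surjective onto 𝓗_{Ψ,Ω}), and it satisfies U_{Ψ,Ω}Ψ = Ω and U_{Ψ,Ω}Ω = 2 Re⟨Ψ,Ω⟩ · Ω − Ψ. -/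
/-! With `r = 2 Re⟨Ψ,Ω⟩`, which is real, the map sends `Ψ ↦ Ω` and `Ω ↦ r Ω - Ψ`. These images have
the same Gram matrix as `Ψ, Ω` (this uses `⟨Ω,Ψ⟩ + ⟨Ψ,Ω⟩ = r`), so sesquilinearity makes the map
isometric on `span{Ψ, Ω}`; and `Ψ = U (r Ψ - Ω)`, `Ω = U Ψ` put both generators in the image of the
span. -/

open Submodule RCLike
open scoped InnerProductSpace

section

variable {𝕜 E F : Type*} [RCLike 𝕜] [NormedAddCommGroup E] [InnerProductSpace 𝕜 E]
  [NormedAddCommGroup F] [InnerProductSpace 𝕜 F]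

theorem inner_swap_add_inner (x y : E) : ⟪y, x⟫_𝕜 + ⟪x, y⟫_𝕜 = ((2 * re ⟪x, y⟫_𝕜 : ℝ) : 𝕜) := by
  rw [← inner_conj_symm y x, add_comm, add_conj]
  push_cast
  ring

theorem LinearMap.inner_map_map_of_mem_span_pair (f : E →ₗ[𝕜] F) {a b x y : E}
    (haa : ⟪f a, f a⟫_𝕜 = ⟪a, a⟫_𝕜) (hab : ⟪f a, f b⟫_𝕜 = ⟪a, b⟫_𝕜)
    (hbb : ⟪f b, f b⟫_𝕜 = ⟪b, b⟫_𝕜)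
    (hx : x ∈ span 𝕜 {a, b}) (hy : y ∈ span 𝕜 {a, b}) :
    ⟪f x, f y⟫_𝕜 = ⟪x, y⟫_𝕜 := by
  obtain ⟨c₁, d₁, rfl⟩ := mem_span_pair.mp hx
  obtain ⟨c₂, d₂, rfl⟩ := mem_span_pair.mp hy
  have hba : ⟪f b, f a⟫_𝕜 = ⟪b, a⟫_𝕜 := by rw [← inner_conj_symm, hab, inner_conj_symm]
  simp only [map_add, map_smul, inner_add_left, inner_add_right, inner_smul_left,
    inner_smul_right, haa, hab, hba, hbb]

variable (𝕜) in
def pairRotation (Ψ Ω : E) : E →ₗ[𝕜] E :=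
  ⟪Ω, Ψ⟫_𝕜 • LinearMap.id - (innerₛₗ 𝕜 Ω).smulRight Ψ + (innerₛₗ 𝕜 Ψ).smulRight Ω

variable {Ψ Ω : E}

theorem pairRotation_apply (Φ : E) :
    pairRotation 𝕜 Ψ Ω Φ = ⟪Ω, Ψ⟫_𝕜 • Φ - ⟪Ω, Φ⟫_𝕜 • Ψ + ⟪Ψ, Φ⟫_𝕜 • Ω :=
  rfl

theorem pairRotation_mem {p : Submodule 𝕜 E} (hΨ : Ψ ∈ p) (hΩ : Ω ∈ p) {Φ : E} (hΦ : Φ ∈ p) :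
    pairRotation 𝕜 Ψ Ω Φ ∈ p :=
  add_mem (sub_mem (smul_mem _ _ hΦ) (smul_mem _ _ hΨ)) (smul_mem _ _ hΩ)

theorem pairRotation_left (hΨ : ‖Ψ‖ = 1) : pairRotation 𝕜 Ψ Ω Ψ = Ω := by
  simp [pairRotation_apply, inner_self_eq_norm_sq_to_K, hΨ]

theorem pairRotation_right (hΩ : ‖Ω‖ = 1) :
    pairRotation 𝕜 Ψ Ω Ω = ((2 * re ⟪Ψ, Ω⟫_𝕜 : ℝ) : 𝕜) • Ω - Ψ := by
  rw [pairRotation_apply, inner_self_eq_norm_sq_to_K, hΩ, ← inner_swap_add_inner]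
  module

theorem inner_pairRotation_pairRotation (hΨ : ‖Ψ‖ = 1) (hΩ : ‖Ω‖ = 1) {x y : E}
    (hx : x ∈ span 𝕜 {Ψ, Ω}) (hy : y ∈ span 𝕜 {Ψ, Ω}) :
    ⟪pairRotation 𝕜 Ψ Ω x, pairRotation 𝕜 Ψ Ω y⟫_𝕜 = ⟪x, y⟫_𝕜 := by
  have hΨΨ : ⟪Ψ, Ψ⟫_𝕜 = 1 := by simp [inner_self_eq_norm_sq_to_K, hΨ]
  have hΩΩ : ⟪Ω, Ω⟫_𝕜 = 1 := by simp [inner_self_eq_norm_sq_to_K, hΩ]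
  have hr := inner_swap_add_inner (𝕜 := 𝕜) Ψ Ω
  refine (pairRotation 𝕜 Ψ Ω).inner_map_map_of_mem_span_pair ?_ ?_ ?_ hx hy
  · rw [pairRotation_left hΨ, hΨΨ, hΩΩ]
  · rw [pairRotation_left hΨ, pairRotation_right hΩ, inner_sub_right, inner_smul_right, hΩΩ]
    linear_combination -hr
  · rw [pairRotation_right hΩ]
    simp only [inner_sub_left, inner_sub_right, inner_smul_left, inner_smul_right, conj_ofReal,
      hΨΨ, hΩΩ]
    linear_combination (-((2 * re ⟪Ψ, Ω⟫_𝕜 : ℝ) : 𝕜)) * hr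

theorem map_pairRotation_span_pair (hΨ : ‖Ψ‖ = 1) (hΩ : ‖Ω‖ = 1) :
    (span 𝕜 {Ψ, Ω}).map (pairRotation 𝕜 Ψ Ω) = span 𝕜 {Ψ, Ω} := by
  have hΨ_mem : Ψ ∈ span 𝕜 {Ψ, Ω} := subset_span (Set.mem_insert _ _)
  have hΩ_mem : Ω ∈ span 𝕜 {Ψ, Ω} := subset_span (Set.mem_insert_of_mem _ rfl)
  refine le_antisymm (map_le_iff_le_comap.mpr fun Φ ↦ pairRotation_mem hΨ_mem hΩ_mem) ?_
  rw [span_le, Set.insert_subset_iff, Set.singleton_subset_iff]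
  constructor
  · refine ⟨((2 * re ⟪Ψ, Ω⟫_𝕜 : ℝ) : 𝕜) • Ψ - Ω, sub_mem (smul_mem _ _ hΨ_mem) hΩ_mem, ?_⟩
    rw [map_sub, map_smul, pairRotation_left hΨ, pairRotation_right hΩ, sub_sub_cancel]
  · exact ⟨Ψ, hΨ_mem, pairRotation_left hΨ⟩

end

/-- Given unit vectors `Ψ, Ω` in a complex Hilbert space, the map
`U Φ = ⟨Ω,Ψ⟩ Φ − ⟨Ω,Φ⟩ Ψ + ⟨Ψ,Φ⟩ Ω` is linear, maps `span{Ψ,Ω}` to itself, is unitary on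
`span{Ψ,Ω}` (preserves inner products and is surjective onto the span), and satisfies
`U Ψ = Ω` and `U Ω = 2 Re⟨Ψ,Ω⟩ · Ω − Ψ`. -/
theorem rotation_unitary_on_span {H : Type*} [NormedAddCommGroup H] [InnerProductSpace ℂ H]
    (Ψ Ω : H) (hΨ : ‖Ψ‖ = 1) (hΩ : ‖Ω‖ = 1)
    (U : H → H)
    (hU : ∀ Φ : H, U Φ = (inner ℂ Ω Ψ : ℂ) • Φ - (inner ℂ Ω Φ : ℂ) • Ψ + (inner ℂ Ψ Φ : ℂ) • Ω) :
    -- U is complex linear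
    (∀ (c : ℂ) (Φ₁ Φ₂ : H), U (c • Φ₁ + Φ₂) = c • U Φ₁ + U Φ₂) ∧
    -- U maps the span of {Ψ, Ω} into itself
    (∀ Φ ∈ Submodule.span ℂ ({Ψ, Ω} : Set H), U Φ ∈ Submodule.span ℂ ({Ψ, Ω} : Set H)) ∧
    -- U preserves inner products of elements of the span
    (∀ Φ₁ ∈ Submodule.span ℂ ({Ψ, Ω} : Set H), ∀ Φ₂ ∈ Submodule.span ℂ ({Ψ, Ω} : Set H),
      (inner ℂ (U Φ₁) (U Φ₂) : ℂ) = inner ℂ Φ₁ Φ₂) ∧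
    -- U is surjective from the span onto the span
    (∀ Ξ ∈ Submodule.span ℂ ({Ψ, Ω} : Set H),
      ∃ Φ ∈ Submodule.span ℂ ({Ψ, Ω} : Set H), U Φ = Ξ) ∧
    U Ψ = Ω ∧
    U Ω = ((2 * (inner ℂ Ψ Ω : ℂ).re : ℝ) : ℂ) • Ω - Ψ := by
  obtain rfl : U = pairRotation ℂ Ψ Ω := funext hU
  have hΨ_mem : Ψ ∈ span ℂ {Ψ, Ω} := subset_span (Set.mem_insert _ _)
  have hΩ_mem : Ω ∈ span ℂ {Ψ, Ω} := subset_span (Set.mem_insert_of_mem _ rfl)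
  refine ⟨fun c Φ₁ Φ₂ ↦ by rw [map_add, map_smul], fun Φ ↦ pairRotation_mem hΨ_mem hΩ_mem,
    fun Φ₁ h₁ Φ₂ h₂ ↦ inner_pairRotation_pairRotation hΨ hΩ h₁ h₂, fun Ξ hΞ ↦ ?_,
    pairRotation_left hΨ, pairRotation_right hΩ⟩
  exact (map_pairRotation_span_pair hΨ hΩ).ge hΞ
end

section
/- There does not exist a continuous function Ω : 𝕊² → ℂ² such that for every r = (x,y,z) ∈ 𝕊² the vector Ω(r) is a unit vector satisfying (r·σ)Ω(r) = Ω(r), where r·σ = x σˣ + y σʸ + z σᶻ. Equivalently, the parametrized Hamiltonian H(r) = −r·σ on ℂ² admits no continuous global choice of normalized ground state (eigenvector of eigenvalue −1) over the 2-sphere. -/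
/-!
Along the inverse stereographic chart from the south pole every `+1`-eigenvector of `r·σ`
satisfies `Ω₁ = w Ω₀`, and along the chart from the north pole `Ω₀ = w̄ Ω₁`; in particular
`Ω₀ ≠ 0` on the first chart and `Ω₁ ≠ 0` on the second. Both charts send the unit circle to the
equator, so `w ↦ Ω₁(north w) / Ω₀(south w)` is a continuous nowhere vanishing function on `ℂ`
that restricts to the identity on the unit circle. Lifting it through the covering map `exp`
(the plane is simply connected) gives a continuous logarithm of `z` on the unit circle, which
does not exist.
-/

open Matrix

/-- The Pauli matrix σˣ. -/
noncomputable def pauliX : Matrix (Fin 2) (Fin 2) ℂ := !![0, 1; 1, 0]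

/-- The Pauli matrix σʸ. -/
noncomputable def pauliY : Matrix (Fin 2) (Fin 2) ℂ := !![0, -Complex.I; Complex.I, 0]

/-- The Pauli matrix σᶻ. -/
noncomputable def pauliZ : Matrix (Fin 2) (Fin 2) ℂ := !![1, 0; 0, -1]

open Complex Metric ComplexConjugate

theorem exists_continuous_exp_eq {A : Type*} [TopologicalSpace A] [SimplyConnectedSpace A]
    [LocallyPathConnectedSpace A] {f : A → ℂ} (hf : Continuous f) (hf0 : ∀ a, f a ≠ 0) :
    ∃ L : A → ℂ, Continuous L ∧ ∀ a, exp (L a) = f a := by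
  obtain ⟨a₀⟩ := (inferInstance : Nonempty A)
  obtain ⟨L, ⟨-, hL⟩, -⟩ := isCoveringMapOn_exp.existsUnique_continuousMap_lifts ⟨f, hf⟩
    (exp_log (hf0 a₀)) hf0
  exact ⟨L, L.continuous, congrFun hL⟩

theorem exists_exp_ne_on_unit_circle {L : ℂ → ℂ} (hL : Continuous L) :
    ∃ z : ℂ, ‖z‖ = 1 ∧ exp (L z) ≠ z := by
  by_contra! hlog
  -- both sides lift `t ↦ exp (t I)` through `exp` and agree at `t = 0`
  have hlift : (fun t : ℝ ↦ L (exp (t * I))) = fun t : ℝ ↦ L 1 + t * I := by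
    refine isCoveringMap_exp.eq_of_comp_eq (by fun_prop) (by fun_prop) ?_ (0 : ℝ) (by simp)
    funext t
    simp [exp_add, hlog 1 (by simp), hlog _ (norm_exp_ofReal_mul_I t)]
  simpa [exp_two_pi_mul_I] using congrFun hlift (2 * Real.pi)

theorem exists_eq_zero_of_eq_self_on_unit_circle {f : ℂ → ℂ} (hf : Continuous f)
    (hcirc : ∀ z : ℂ, ‖z‖ = 1 → f z = z) : ∃ z, f z = 0 := by
  by_contra! hf0
  obtain ⟨L, hL, hexp⟩ := exists_continuous_exp_eq hf hf0
  obtain ⟨z, hz, hne⟩ := exists_exp_ne_on_unit_circle hL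
  exact hne ((hexp z).trans (hcirc z hz))

noncomputable def pauliDot (r : EuclideanSpace ℝ (Fin 3)) : Matrix (Fin 2) (Fin 2) ℂ :=
  (r 0 : ℂ) • pauliX + (r 1 : ℂ) • pauliY + (r 2 : ℂ) • pauliZ

theorem pauliDot_eq (r : EuclideanSpace ℝ (Fin 3)) :
    pauliDot r = !![(r 2 : ℂ), r 0 - r 1 * I; r 0 + r 1 * I, -r 2] := by
  ext i j
  fin_cases i <;> fin_cases j <;> simp [pauliDot, pauliX, pauliY, pauliZ, sub_eq_add_neg]

theorem pauliDot_mulVec_eq_self {r : EuclideanSpace ℝ (Fin 3)} {v : Fin 2 → ℂ}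
    (hv : (pauliDot r).mulVec v = v) :
    (1 - r 2) * v 0 = (r 0 - r 1 * I) * v 1 ∧ (1 + r 2) * v 1 = (r 0 + r 1 * I) * v 0 := by
  rw [pauliDot_eq] at hv
  have h0 := congrFun hv 0
  have h1 := congrFun hv 1
  simp only [mulVec, dotProduct, Fin.sum_univ_two, of_apply, cons_val', cons_val_fin_one,
    cons_val_zero, cons_val_one] at h0 h1
  exact ⟨by linear_combination -h0, by linear_combination -h1⟩

theorem apply_ne_zero_of_apply_eq_mul {𝕜 : Type*} [RCLike 𝕜] {v : EuclideanSpace 𝕜 (Fin 2)}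
    (hv : v ≠ 0) {i j : Fin 2} (hij : i ≠ j) {c : 𝕜} (h : v j = c * v i) : v i ≠ 0 := by
  intro hi
  refine hv (PiLp.ext fun k ↦ ?_)
  obtain rfl | rfl : k = i ∨ k = j := by omega
  · simpa using hi
  · simpa [hi] using h

theorem one_add_norm_sq_ne_zero (w : ℂ) : (1 + ‖w‖ ^ 2 : ℂ) ≠ 0 := by
  exact_mod_cast (by positivity : (1 + ‖w‖ ^ 2 : ℝ) ≠ 0)

/-- Inverse stereographic projection onto the unit sphere from the pole `(0, 0, -s)`. -/
noncomputable def invStereo (s : ℝ) (hs : s ^ 2 = 1) (w : ℂ) :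
    sphere (0 : EuclideanSpace ℝ (Fin 3)) 1 :=
  ⟨(1 + ‖w‖ ^ 2)⁻¹ • !₂[2 * w.re, 2 * w.im, s * (1 - ‖w‖ ^ 2)], by
    have hpos : 0 < 1 + ‖w‖ ^ 2 := by positivity
    have hw : ‖w‖ ^ 2 = w.re ^ 2 + w.im ^ 2 := by rw [← normSq_eq_norm_sq, normSq_apply]; ring
    rw [mem_sphere_zero_iff_norm, norm_smul, EuclideanSpace.norm_eq, Fin.sum_univ_three]
    simp only [Matrix.cons_val, Real.norm_eq_abs, sq_abs, norm_inv, abs_of_pos hpos]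
    rw [inv_mul_eq_one₀ hpos.ne', ← Real.sqrt_sq hpos.le]
    congr 1
    linear_combination (-(1 - ‖w‖ ^ 2) ^ 2) * hs + 4 * hw⟩

theorem continuous_invStereo (s : ℝ) (hs : s ^ 2 = 1) : Continuous (invStereo s hs) := by
  refine Continuous.subtype_mk ?_ _
  have hpos : ∀ w : ℂ, 1 + ‖w‖ ^ 2 ≠ 0 := fun w ↦ by positivity
  fun_prop (disch := exact hpos)

theorem invStereo_coords (s : ℝ) (hs : s ^ 2 = 1) (w : ℂ) :
    let r : EuclideanSpace ℝ (Fin 3) := invStereo s hs w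
    (r 0 : ℂ) + r 1 * I = 2 * w / (1 + ‖w‖ ^ 2) ∧
    (r 0 : ℂ) - r 1 * I = 2 * conj w / (1 + ‖w‖ ^ 2) ∧
    (r 2 : ℂ) = s * (1 - ‖w‖ ^ 2) / (1 + ‖w‖ ^ 2) := by
  have hpos := one_add_norm_sq_ne_zero w
  refine ⟨?_, ?_, ?_⟩ <;>
    simp only [invStereo, PiLp.smul_apply, smul_eq_mul, cons_val_zero, cons_val_one, cons_val] <;>
    push_cast <;> field_simp
  · exact re_add_im w
  · apply Complex.ext <;> simp

theorem invStereo_neg_one_of_norm_eq_one {w : ℂ} (hw : ‖w‖ = 1) :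
    invStereo (-1) (by norm_num) w = invStereo 1 (one_pow 2) w := by
  simp [invStereo, hw]

theorem apply_one_eq_of_mulVec_invStereo_one {w : ℂ} {v : Fin 2 → ℂ}
    (hv : (pauliDot (invStereo 1 (one_pow 2) w)).mulVec v = v) : v 1 = w * v 0 := by
  obtain ⟨hxy, -, hz⟩ := invStereo_coords 1 (one_pow 2) w
  have hpos := one_add_norm_sq_ne_zero w
  have h := (pauliDot_mulVec_eq_self hv).2
  rw [hxy, hz] at h
  field_simp at h
  push_cast at h
  linear_combination h / 2

theorem apply_zero_eq_of_mulVec_invStereo_neg_one {w : ℂ} {v : Fin 2 → ℂ}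
    (hv : (pauliDot (invStereo (-1) (by norm_num) w)).mulVec v = v) : v 0 = conj w * v 1 := by
  obtain ⟨-, hxy, hz⟩ := invStereo_coords (-1) (by norm_num) w
  have hpos := one_add_norm_sq_ne_zero w
  have h := (pauliDot_mulVec_eq_self hv).1
  rw [hxy, hz] at h
  field_simp at h
  push_cast at h
  linear_combination h / 2

/-- There is no continuous choice `Ω : 𝕊² → ℂ²` of unit vectors with `(r·σ) Ω(r) = Ω(r)`
for every `r ∈ 𝕊²`; i.e. the family of Hamiltonians `H(r) = −r·σ` admits no continuous
global normalized ground state over the 2-sphere. -/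
theorem no_continuous_ground_state :
    ¬ ∃ Ω : Metric.sphere (0 : EuclideanSpace ℝ (Fin 3)) 1 → EuclideanSpace ℂ (Fin 2),
      Continuous Ω ∧
      ∀ r : Metric.sphere (0 : EuclideanSpace ℝ (Fin 3)) 1,
        ‖Ω r‖ = 1 ∧
        (((r : EuclideanSpace ℝ (Fin 3)) 0 : ℂ) • pauliX
            + ((r : EuclideanSpace ℝ (Fin 3)) 1 : ℂ) • pauliY
            + ((r : EuclideanSpace ℝ (Fin 3)) 2 : ℂ) • pauliZ).mulVec (Ω r) = Ω r := by
  rintro ⟨Ω, hΩ, hground⟩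
  set south := invStereo 1 (one_pow 2)
  set north := invStereo (-1) (by norm_num)
  have hne (r) : Ω r ≠ 0 := norm_ne_zero_iff.mp (by simp [(hground r).1])
  have hsouth (w) : Ω (south w) 1 = w * Ω (south w) 0 :=
    apply_one_eq_of_mulVec_invStereo_one (hground _).2
  have hnorth (w) : Ω (north w) 0 = conj w * Ω (north w) 1 :=
    apply_zero_eq_of_mulVec_invStereo_neg_one (hground _).2
  have hsouth0 (w) : Ω (south w) 0 ≠ 0 :=
    apply_ne_zero_of_apply_eq_mul (hne _) (by decide) (hsouth w)
  have hnorth1 (w) : Ω (north w) 1 ≠ 0 :=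
    apply_ne_zero_of_apply_eq_mul (hne _) (by decide) (hnorth w)
  have hcont : Continuous fun w ↦ Ω (north w) 1 / Ω (south w) 0 := by
    have := continuous_invStereo 1 (one_pow 2)
    have := continuous_invStereo (-1) (by norm_num)
    exact Continuous.div (by fun_prop) (by fun_prop) hsouth0
  obtain ⟨w, hw⟩ := exists_eq_zero_of_eq_self_on_unit_circle hcont fun w hw ↦ by
    rw [show north w = south w from invStereo_neg_one_of_norm_eq_one hw, hsouth w,
      mul_div_cancel_right₀ _ (hsouth0 w)]
  exact div_ne_zero (hnorth1 w) (hsouth0 w) hw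
end
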